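/- Let v(x,t) solve x = a(v)t + b(v) near the catastrophe point (x₀,t₀,v₀), with the degeneracy conditions a(v₀)t₀+b(v₀)=x₀, a'(v₀)t₀+b'(v₀)=0, a''(v₀)t₀+b''(v₀)=0, and κ = −(a'''(v₀)t₀+b'''(v₀)) ≠ 0, and suppose κ·a'(v₀) > 0. Then for fixed (X,S) with S < 0, the rescaled quantity w_λ(X,S) := λ^{−1/3}·( v(x₀ + a(v₀)λ^{2/3}S + λX, t₀ + λ^{2/3}S) − v₀ ), defined for λ > 0, converges as λ → 0⁺ to the unique real root w of X = a'(v₀)·w·S − κ·w³/6. -/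

import Mathlib

open Topology Filter
open Set


private lemma id2eq (f : ℝ → ℝ) : iteratedDeriv 2 f = deriv (deriv f) := by
  rw [iteratedDeriv_succ, iteratedDeriv_one]

private lemma id3eq (f : ℝ → ℝ) : iteratedDeriv 3 f = iteratedDeriv 2 (deriv f) := by
  rw [iteratedDeriv_succ']

private lemma aux_T2 (φ : ℝ → ℝ) (hφ : ContDiff ℝ (⊤ : ℕ∞) φ) (c : ℝ)
    (h0 : φ c = 0) (h1 : deriv φ c = 0) :
    Tendsto (fun v => φ v / (v - c) ^ 2) (𝓝[≠] c) (𝓝 (iteratedDeriv 2 φ c / 2)) := by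
  have hd : Differentiable ℝ φ := hφ.differentiable (by simp)
  have hd2 := (contDiff_infty_iff_deriv.mp hφ).2
  have hslope : Tendsto (slope (deriv φ) c) (𝓝[≠] c) (𝓝 (iteratedDeriv 2 φ c)) := by
    rw [id2eq]
    exact hasDerivAt_iff_tendsto_slope.mp ((hd2.differentiable (by simp) c).hasDerivAt)
  apply HasDerivAt.lhopital_zero_nhdsNE (f' := fun v => deriv φ v) (g' := fun v => 2 * (v - c))
  · exact Eventually.of_forall fun v => (hd v).hasDerivAt
  · refine Eventually.of_forall fun v => ?_
    have h := ((hasDerivAt_id v).sub_const c).fun_pow 2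
    simpa using h
  · filter_upwards [self_mem_nhdsWithin] with v hv
    exact mul_ne_zero two_ne_zero (sub_ne_zero.mpr hv)
  · have h := hd.continuous.tendsto c
    rw [h0] at h; exact h.mono_left nhdsWithin_le_nhds
  · have h : Tendsto (fun v : ℝ => (v - c) ^ 2) (𝓝 c) (𝓝 ((c - c) ^ 2)) :=
      (continuous_id.sub continuous_const).pow 2 |>.tendsto c
    simp only [sub_self] at h
    norm_num at h
    exact h.mono_left nhdsWithin_le_nhds
  · refine Tendsto.congr' ?_ (hslope.div_const 2)
    filter_upwards [self_mem_nhdsWithin] with v hv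
    rw [slope_def_field, h1, sub_zero, div_div, mul_comm]

private lemma aux_T3 (φ : ℝ → ℝ) (hφ : ContDiff ℝ (⊤ : ℕ∞) φ) (c : ℝ)
    (h0 : φ c = 0) (h1 : deriv φ c = 0) (h2 : iteratedDeriv 2 φ c = 0) :
    Tendsto (fun v => φ v / (v - c) ^ 3) (𝓝[≠] c) (𝓝 (iteratedDeriv 3 φ c / 6)) := by
  have hd : Differentiable ℝ φ := hφ.differentiable (by simp)
  have hd2 := (contDiff_infty_iff_deriv.mp hφ).2
  have hsub : Tendsto (fun v => deriv φ v / (v - c) ^ 2) (𝓝[≠] c)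
      (𝓝 (iteratedDeriv 3 φ c / 2)) := by
    have h := aux_T2 (deriv φ) hd2 c h1 (by rw [← id2eq]; exact h2)
    rwa [← id3eq] at h
  apply HasDerivAt.lhopital_zero_nhdsNE (f' := fun v => deriv φ v)
    (g' := fun v => 3 * (v - c) ^ 2)
  · exact Eventually.of_forall fun v => (hd v).hasDerivAt
  · refine Eventually.of_forall fun v => ?_
    have h := ((hasDerivAt_id v).sub_const c).fun_pow 3
    norm_num at h
    convert h using 1
  · filter_upwards [self_mem_nhdsWithin] with v hv
    have : (v - c) ^ 2 ≠ 0 := pow_ne_zero 2 (sub_ne_zero.mpr hv)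
    exact mul_ne_zero three_ne_zero this
  · have h := hd.continuous.tendsto c
    rw [h0] at h; exact h.mono_left nhdsWithin_le_nhds
  · have h : Tendsto (fun v : ℝ => (v - c) ^ 3) (𝓝 c) (𝓝 ((c - c) ^ 3)) :=
      (continuous_id.sub continuous_const).pow 3 |>.tendsto c
    simp only [sub_self] at h
    norm_num at h
    exact h.mono_left nhdsWithin_le_nhds
  · have h := hsub.div_const 3
    have he : iteratedDeriv 3 φ c / 2 / 3 = iteratedDeriv 3 φ c / 6 := by ring
    rw [he] at h
    refine Tendsto.congr' ?_ h
    filter_upwards [self_mem_nhdsWithin] with v hv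
    rw [div_div, mul_comm]

set_option maxHeartbeats 1600000 in
private lemma main_pos (a b : ℝ → ℝ) (ha : ContDiff ℝ (⊤ : ℕ∞) a) (hb : ContDiff ℝ (⊤ : ℕ∞) b)
    (v₀ t₀ x₀ κ : ℝ)
    (h0 : a v₀ * t₀ + b v₀ = x₀)
    (h1 : deriv a v₀ * t₀ + deriv b v₀ = 0)
    (h2 : iteratedDeriv 2 a v₀ * t₀ + iteratedDeriv 2 b v₀ = 0)
    (hκ : κ = -(iteratedDeriv 3 a v₀ * t₀ + iteratedDeriv 3 b v₀))
    (hκpos : 0 < κ) (hgen : κ * deriv a v₀ > 0)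
    (v : ℝ → ℝ → ℝ)
    (hv : ∀ᶠ p : ℝ × ℝ in 𝓝 (x₀, t₀), p.1 = a (v p.1 p.2) * p.2 + b (v p.1 p.2))
    (hvc : ContinuousAt (fun p : ℝ × ℝ => v p.1 p.2) (x₀, t₀))
    (hv0 : v x₀ t₀ = v₀)
    (X S : ℝ) (hS : S < 0) (w : ℝ) (hw : X = deriv a v₀ * w * S - κ * w ^ 3 / 6) :
    Tendsto (fun μ : ℝ =>
        μ⁻¹ * (v (x₀ + a v₀ * μ ^ 2 * S + μ ^ 3 * X) (t₀ + μ ^ 2 * S) - v₀))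
      (𝓝[>] (0 : ℝ)) (𝓝 w) := by
  have hda : Differentiable ℝ a := ha.differentiable (by simp)
  have hdb : Differentiable ℝ b := hb.differentiable (by simp)
  have ha' : 0 < deriv a v₀ := by nlinarith
  set g : ℝ → ℝ := fun u => a u * t₀ + b u - x₀ with hg_def
  have hg : ContDiff ℝ (⊤ : ℕ∞) g := ((ha.mul contDiff_const).add hb).sub contDiff_const
  have hgderiv : deriv g = fun u => deriv a u * t₀ + deriv b u := by
    funext u
    exact ((((hda u).hasDerivAt.mul_const t₀).add (hdb u).hasDerivAt).sub_const x₀).deriv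
  have hda2 := (contDiff_infty_iff_deriv.mp ha).2
  have hdb2 := (contDiff_infty_iff_deriv.mp hb).2
  have hg2 : deriv (deriv g) = fun u => deriv (deriv a) u * t₀ + deriv (deriv b) u := by
    rw [hgderiv]; funext u
    exact (((hda2.differentiable (by simp) u).hasDerivAt.mul_const t₀).add
      (hdb2.differentiable (by simp) u).hasDerivAt).deriv
  have hda3 := (contDiff_infty_iff_deriv.mp hda2).2
  have hdb3 := (contDiff_infty_iff_deriv.mp hdb2).2
  have hg3 : deriv (deriv (deriv g)) v₀
      = deriv (deriv (deriv a)) v₀ * t₀ + deriv (deriv (deriv b)) v₀ := by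
    rw [hg2]
    exact (((hda3.differentiable (by simp) v₀).hasDerivAt.mul_const t₀).add
      (hdb3.differentiable (by simp) v₀).hasDerivAt).deriv
  have id3d : ∀ f : ℝ → ℝ, iteratedDeriv 3 f = deriv (deriv (deriv f)) := by
    intro f; rw [id3eq, id2eq]
  have hgv0 : g v₀ = 0 := by simp [hg_def, h0]
  have hg1v : deriv g v₀ = 0 := by rw [hgderiv]; exact h1
  have hg2v : iteratedDeriv 2 g v₀ = 0 := by
    rw [id2eq, hg2]
    show deriv (deriv a) v₀ * t₀ + deriv (deriv b) v₀ = 0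
    simp only [← id2eq]
    exact h2
  have hg3v : iteratedDeriv 3 g v₀ = -κ := by
    rw [id3d, hg3]
    simp only [← id3d]
    rw [hκ]; ring
  have Lg3 : Tendsto (fun u => g u / (u - v₀) ^ 3) (𝓝[≠] v₀) (𝓝 (-κ / 6)) := by
    have h := aux_T3 g hg v₀ hgv0 hg1v hg2v
    rwa [hg3v] at h
  have Ldg2 : Tendsto (fun u => deriv g u / (u - v₀) ^ 2) (𝓝[≠] v₀) (𝓝 (-κ / 2)) := by
    have hgd := (contDiff_infty_iff_deriv.mp hg).2
    have h := aux_T2 (deriv g) hgd v₀ hg1v (by rw [← id2eq]; exact hg2v)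
    rwa [← id3eq, hg3v] at h
  have Lsl : Tendsto (fun u => (a u - a v₀) / (u - v₀)) (𝓝[≠] v₀) (𝓝 (deriv a v₀)) := by
    have h := hasDerivAt_iff_tendsto_slope.mp (hda v₀).hasDerivAt
    refine h.congr fun u => ?_
    rw [slope_def_field]
  -- choice of δ
  obtain ⟨δ1, hδ1pos, hδ1⟩ : ∃ δ1 > 0, ∀ u, u ≠ v₀ → |u - v₀| < δ1 → deriv g u < 0 := by
    have hev : ∀ᶠ u in 𝓝[≠] v₀, deriv g u / (u - v₀) ^ 2 < 0 :=
      Ldg2.eventually_lt_const (by linarith)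
    rw [eventually_nhdsWithin_iff, Metric.eventually_nhds_iff] at hev
    obtain ⟨δ1, hp, hh⟩ := hev
    refine ⟨δ1, hp, fun u hu hud => ?_⟩
    have h := hh (show dist u v₀ < δ1 by rwa [Real.dist_eq]) (by simpa using hu)
    have hne : u - v₀ ≠ 0 := sub_ne_zero.mpr hu
    have hpow : 0 < (u - v₀) ^ 2 := by positivity
    have h2' := mul_neg_of_neg_of_pos h hpow
    rwa [div_mul_cancel₀ _ (ne_of_gt hpow)] at h2'
  obtain ⟨δ2, hδ2pos, hδ2⟩ : ∃ δ2 > 0, ∀ u, |u - v₀| < δ2 → deriv a v₀ / 2 < deriv a u := by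
    have hev : ∀ᶠ u in 𝓝 v₀, deriv a v₀ / 2 < deriv a u :=
      (hda2.continuous.tendsto v₀).eventually_const_lt (by linarith)
    rw [Metric.eventually_nhds_iff] at hev
    obtain ⟨δ2, hp, hh⟩ := hev
    exact ⟨δ2, hp, fun u hud => hh (by rwa [Real.dist_eq])⟩
  set δ := min δ1 δ2 / 2 with hδdef
  have hδpos : 0 < δ := by positivity
  have hδlt1 : δ < δ1 := by
    have h := min_le_left δ1 δ2; rw [hδdef]; linarith
  have hδlt2 : δ < δ2 := by
    have h := min_le_right δ1 δ2; rw [hδdef]; linarith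
  -- strict monotonicity
  have mono : ∀ μ : ℝ, 0 < μ →
      StrictAntiOn (fun u => a u * (t₀ + μ ^ 2 * S) + b u) (Icc (v₀ - δ) (v₀ + δ)) := by
    intro μ hμ
    apply strictAntiOn_of_deriv_neg (convex_Icc _ _)
    · exact ((hda.continuous.mul continuous_const).add hdb.continuous).continuousOn
    · intro u hu
      rw [interior_Icc] at hu
      have hud : |u - v₀| < δ := by
        rw [abs_sub_lt_iff]
        exact ⟨by linarith [hu.2], by linarith [hu.1]⟩
      have hderiv : deriv (fun u => a u * (t₀ + μ ^ 2 * S) + b u) u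
          = deriv g u + deriv a u * (μ ^ 2 * S) := by
        rw [show deriv (fun u => a u * (t₀ + μ ^ 2 * S) + b u) u
            = deriv a u * (t₀ + μ ^ 2 * S) + deriv b u from
            (((hda u).hasDerivAt.mul_const (t₀ + μ ^ 2 * S)).add (hdb u).hasDerivAt).deriv,
          hgderiv]
        ring
      rw [hderiv]
      have hpos : 0 < deriv a u := lt_trans (by linarith) (hδ2 u (lt_trans hud hδlt2))
      have hterm : deriv a u * (μ ^ 2 * S) < 0 :=
        mul_neg_of_pos_of_neg hpos (mul_neg_of_pos_of_neg (pow_pos hμ 2) hS)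
      rcases eq_or_ne u v₀ with rfl | hne
      · rw [hg1v]; linarith
      · have := hδ1 u hne (lt_trans hud hδlt1); linarith
  -- eventual facts
  have hxt : Tendsto (fun μ : ℝ => (x₀ + a v₀ * μ ^ 2 * S + μ ^ 3 * X, t₀ + μ ^ 2 * S))
      (𝓝[>] (0 : ℝ)) (𝓝 (x₀, t₀)) := by
    have hc : Continuous fun μ : ℝ =>
        (x₀ + a v₀ * μ ^ 2 * S + μ ^ 3 * X, t₀ + μ ^ 2 * S) := by fun_prop
    exact (hc.tendsto' 0 (x₀, t₀) (by norm_num)).mono_left nhdsWithin_le_nhds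
  have hV : Tendsto (fun μ : ℝ => v (x₀ + a v₀ * μ ^ 2 * S + μ ^ 3 * X) (t₀ + μ ^ 2 * S))
      (𝓝[>] (0 : ℝ)) (𝓝 v₀) := by
    have h := hvc.tendsto.comp hxt
    rwa [hv0] at h
  have heq : ∀ᶠ μ in 𝓝[>] (0 : ℝ),
      x₀ + a v₀ * μ ^ 2 * S + μ ^ 3 * X
        = a (v (x₀ + a v₀ * μ ^ 2 * S + μ ^ 3 * X) (t₀ + μ ^ 2 * S)) * (t₀ + μ ^ 2 * S)
          + b (v (x₀ + a v₀ * μ ^ 2 * S + μ ^ 3 * X) (t₀ + μ ^ 2 * S)) := hxt.eventually hv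
  have hVin : ∀ᶠ μ in 𝓝[>] (0 : ℝ),
      v (x₀ + a v₀ * μ ^ 2 * S + μ ^ 3 * X) (t₀ + μ ^ 2 * S) ∈ Icc (v₀ - δ) (v₀ + δ) :=
    hV.eventually_mem (Icc_mem_nhds (by linarith) (by linarith))
  -- pointwise limit
  have hL : ∀ c : ℝ, Tendsto (fun μ : ℝ =>
      (a (v₀ + μ * c) * (t₀ + μ ^ 2 * S) + b (v₀ + μ * c)
        - (x₀ + a v₀ * μ ^ 2 * S + μ ^ 3 * X)) / μ ^ 3)
      (𝓝[>] (0 : ℝ)) (𝓝 (deriv a v₀ * c * S - κ * c ^ 3 / 6 - X)) := by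
    intro c
    rcases eq_or_ne c 0 with rfl | hc
    · have hval : deriv a v₀ * 0 * S - κ * 0 ^ 3 / 6 - X = -X := by ring
      rw [hval]
      refine Tendsto.congr' ?_ (tendsto_const_nhds (x := -X))
      filter_upwards [self_mem_nhdsWithin] with μ hμ
      have hμ0 : μ ≠ 0 := ne_of_gt hμ
      simp only [mul_zero, add_zero]
      rw [eq_div_iff (pow_ne_zero 3 hμ0)]
      linear_combination -h0
    · have hmap2 : Tendsto (fun μ : ℝ => v₀ + μ * c) (𝓝[>] (0 : ℝ)) (𝓝[≠] v₀) := by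
        rw [tendsto_nhdsWithin_iff]
        constructor
        · have hcont : Continuous fun μ : ℝ => v₀ + μ * c := by fun_prop
          exact (hcont.tendsto' 0 v₀ (by norm_num)).mono_left nhdsWithin_le_nhds
        · filter_upwards [self_mem_nhdsWithin] with μ hμ
          have hne : μ * c ≠ 0 := mul_ne_zero (ne_of_gt hμ) hc
          simp only [mem_compl_iff, mem_singleton_iff]
          intro hcontra
          exact hne (by linarith)
      have T1 := (Lg3.comp hmap2).mul_const (c ^ 3)
      have T2 := ((Lsl.comp hmap2).mul_const c).mul_const S
      have Tall := (T1.add T2).sub_const X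
      have hval : -κ / 6 * c ^ 3 + deriv a v₀ * c * S - X
          = deriv a v₀ * c * S - κ * c ^ 3 / 6 - X := by ring
      rw [hval] at Tall
      refine Tendsto.congr' ?_ Tall
      filter_upwards [self_mem_nhdsWithin] with μ hμ
      have hμ0 : μ ≠ 0 := ne_of_gt hμ
      simp only [Function.comp_apply, hg_def]
      rw [show v₀ + μ * c - v₀ = μ * c by ring]
      field_simp
      ring
  -- conclusion via order
  rw [tendsto_order]
  have hsq : ∀ cc : ℝ, 0 ≤ cc ^ 2 + cc * w + w ^ 2 := by
    intro cc; nlinarith [sq_nonneg (cc + w), sq_nonneg cc, sq_nonneg w]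
  have hsmall : ∀ c : ℝ, ∀ᶠ μ in 𝓝[>] (0 : ℝ), |μ * c| < δ := by
    intro c
    have hcont : Continuous fun μ : ℝ => |μ * c| := by fun_prop
    have hten := (hcont.tendsto' 0 0 (by norm_num)).mono_left
      (nhdsWithin_le_nhds (s := Ioi (0:ℝ)))
    exact hten.eventually_lt_const hδpos
  constructor
  · intro c hc
    have hΦ : 0 < deriv a v₀ * c * S - κ * c ^ 3 / 6 - X := by
      rw [hw]
      have h₁ : 0 < deriv a v₀ * (w - c) * (-S) :=
        mul_pos (mul_pos ha' (by linarith)) (by linarith)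
      have h₂ : 0 ≤ κ * (w - c) * (c ^ 2 + c * w + w ^ 2) :=
        mul_nonneg (mul_nonneg hκpos.le (by linarith)) (hsq c)
      nlinarith [h₁, h₂]
    have hnum := (hL c).eventually_const_lt hΦ
    filter_upwards [self_mem_nhdsWithin, hnum, heq, hVin, hsmall c]
      with μ hμ hnum' heq' hVin' hsmall'
    have hμpos : (0 : ℝ) < μ := hμ
    have hμ3 : (0 : ℝ) < μ ^ 3 := pow_pos hμpos 3
    set y := v (x₀ + a v₀ * μ ^ 2 * S + μ ^ 3 * X) (t₀ + μ ^ 2 * S) with hy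
    have hnum2 : 0 < a (v₀ + μ * c) * (t₀ + μ ^ 2 * S) + b (v₀ + μ * c)
        - (x₀ + a v₀ * μ ^ 2 * S + μ ^ 3 * X) := by
      have h := mul_pos hnum' hμ3
      rwa [div_mul_cancel₀ _ (ne_of_gt hμ3)] at h
    have hmem1 : v₀ + μ * c ∈ Icc (v₀ - δ) (v₀ + δ) := by
      have h := abs_lt.mp hsmall'
      exact ⟨by linarith [h.1], by linarith [h.2]⟩
    have hFgt : (fun u => a u * (t₀ + μ ^ 2 * S) + b u) y
        < (fun u => a u * (t₀ + μ ^ 2 * S) + b u) (v₀ + μ * c) := by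
      simp only []
      linarith [heq', hnum2]
    have hlt : v₀ + μ * c < y := ((mono μ hμpos).lt_iff_gt hVin' hmem1).mp hFgt
    have h3 : μ * c < y - v₀ := by linarith
    have h4 := (mul_lt_mul_iff_right₀ (inv_pos.mpr hμpos)).mpr h3
    rwa [inv_mul_cancel_left₀ (ne_of_gt hμpos)] at h4
  · intro c hc
    have hΦ : deriv a v₀ * c * S - κ * c ^ 3 / 6 - X < 0 := by
      rw [hw]
      have h₁ : 0 < deriv a v₀ * (c - w) * (-S) :=
        mul_pos (mul_pos ha' (by linarith)) (by linarith)
      have h₂ : 0 ≤ κ * (c - w) * (c ^ 2 + c * w + w ^ 2) :=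
        mul_nonneg (mul_nonneg hκpos.le (by linarith)) (hsq c)
      nlinarith [h₁, h₂]
    have hnum := (hL c).eventually_lt_const hΦ
    filter_upwards [self_mem_nhdsWithin, hnum, heq, hVin, hsmall c]
      with μ hμ hnum' heq' hVin' hsmall'
    have hμpos : (0 : ℝ) < μ := hμ
    have hμ3 : (0 : ℝ) < μ ^ 3 := pow_pos hμpos 3
    set y := v (x₀ + a v₀ * μ ^ 2 * S + μ ^ 3 * X) (t₀ + μ ^ 2 * S) with hy
    have hnum2 : a (v₀ + μ * c) * (t₀ + μ ^ 2 * S) + b (v₀ + μ * c)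
        - (x₀ + a v₀ * μ ^ 2 * S + μ ^ 3 * X) < 0 := by
      have h := mul_neg_of_neg_of_pos hnum' hμ3
      rwa [div_mul_cancel₀ _ (ne_of_gt hμ3)] at h
    have hmem1 : v₀ + μ * c ∈ Icc (v₀ - δ) (v₀ + δ) := by
      have h := abs_lt.mp hsmall'
      exact ⟨by linarith [h.1], by linarith [h.2]⟩
    have hFlt : (fun u => a u * (t₀ + μ ^ 2 * S) + b u) (v₀ + μ * c)
        < (fun u => a u * (t₀ + μ ^ 2 * S) + b u) y := by
      simp only []
      linarith [heq', hnum2]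
    have hlt : y < v₀ + μ * c := ((mono μ hμpos).lt_iff_gt hmem1 hVin').mp hFlt
    have h3 : y - v₀ < μ * c := by linarith
    have h4 := (mul_lt_mul_iff_right₀ (inv_pos.mpr hμpos)).mpr h3
    rwa [inv_mul_cancel_left₀ (ne_of_gt hμpos)] at h4


/-- Universality of the cubic-root singularity for the unperturbed equation:
near a generic gradient catastrophe of the characteristic solution
`x = a(v) t + b(v)`, the rescaled solution
`λ^{-1/3} (v(x₀ + a(v₀) λ^{2/3} S + λ X, t₀ + λ^{2/3} S) − v₀)` converges as
`λ → 0⁺` (for fixed `(X,S)` with `S < 0`) to the unique real root `w` of the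
cubic `X = a'(v₀) w S − κ w³/6`. -/
theorem cubic_root_universality
    (a b : ℝ → ℝ) (ha : ContDiff ℝ (⊤ : ℕ∞) a) (hb : ContDiff ℝ (⊤ : ℕ∞) b)
    (v₀ t₀ x₀ κ : ℝ)
    (h0 : a v₀ * t₀ + b v₀ = x₀)
    (h1 : deriv a v₀ * t₀ + deriv b v₀ = 0)
    (h2 : iteratedDeriv 2 a v₀ * t₀ + iteratedDeriv 2 b v₀ = 0)
    (hκ : κ = -(iteratedDeriv 3 a v₀ * t₀ + iteratedDeriv 3 b v₀))
    (hκ0 : κ ≠ 0) (hgen : κ * deriv a v₀ > 0)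
    (v : ℝ → ℝ → ℝ)
    (hv : ∀ᶠ p : ℝ × ℝ in 𝓝 (x₀, t₀), p.1 = a (v p.1 p.2) * p.2 + b (v p.1 p.2))
    (hvc : ContinuousAt (fun p : ℝ × ℝ => v p.1 p.2) (x₀, t₀))
    (hv0 : v x₀ t₀ = v₀) :
    ∀ X S : ℝ, S < 0 → ∀ w : ℝ, X = deriv a v₀ * w * S - κ * w ^ 3 / 6 →
      Tendsto (fun lam : ℝ =>
          lam ^ (-(1 : ℝ) / 3) *
            (v (x₀ + a v₀ * lam ^ ((2 : ℝ) / 3) * S + lam * X)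
               (t₀ + lam ^ ((2 : ℝ) / 3) * S) - v₀))
        (𝓝[>] (0 : ℝ)) (𝓝 w) := by
  intro X S hS w hw
  have haT : ContDiff ℝ (⊤ : ℕ∞) a := ha.of_le (by simp)
  have hbT : ContDiff ℝ (⊤ : ℕ∞) b := hb.of_le (by simp)
  have key : Tendsto (fun μ : ℝ =>
      μ⁻¹ * (v (x₀ + a v₀ * μ ^ 2 * S + μ ^ 3 * X) (t₀ + μ ^ 2 * S) - v₀))
      (𝓝[>] (0 : ℝ)) (𝓝 w) := by
    rcases lt_or_gt_of_ne hκ0 with hneg | hpos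
    · -- κ < 0 : reflect v ↦ -v
      have da : deriv (fun u => a (-u)) (-v₀) = -deriv a v₀ := by
        have h := iteratedDeriv_comp_neg 1 a (-v₀)
        simpa [iteratedDeriv_one] using h
      have db : deriv (fun u => b (-u)) (-v₀) = -deriv b v₀ := by
        have h := iteratedDeriv_comp_neg 1 b (-v₀)
        simpa [iteratedDeriv_one] using h
      have d2a : iteratedDeriv 2 (fun u => a (-u)) (-v₀) = iteratedDeriv 2 a v₀ := by
        have h := iteratedDeriv_comp_neg 2 a (-v₀)
        simpa using h
      have d2b : iteratedDeriv 2 (fun u => b (-u)) (-v₀) = iteratedDeriv 2 b v₀ := by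
        have h := iteratedDeriv_comp_neg 2 b (-v₀)
        simpa using h
      have d3a : iteratedDeriv 3 (fun u => a (-u)) (-v₀) = -iteratedDeriv 3 a v₀ := by
        have h := iteratedDeriv_comp_neg 3 a (-v₀)
        simpa [pow_succ] using h
      have d3b : iteratedDeriv 3 (fun u => b (-u)) (-v₀) = -iteratedDeriv 3 b v₀ := by
        have h := iteratedDeriv_comp_neg 3 b (-v₀)
        simpa [pow_succ] using h
      have hrefl := main_pos (fun u => a (-u)) (fun u => b (-u))
        (haT.comp contDiff_neg) (hbT.comp contDiff_neg)
        (-v₀) t₀ x₀ (-κ)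
        (by simpa using h0)
        (by rw [da, db]; linarith)
        (by rw [d2a, d2b]; exact h2)
        (by rw [d3a, d3b]; rw [hκ]; ring)
        (by linarith)
        (by rw [da]; nlinarith [hgen])
        (fun x t => -(v x t))
        (hv.mono fun p hp => by simpa using hp)
        hvc.neg
        (by simp [hv0])
        X S hS (-w)
        (by rw [da, hw]; ring)
      have h2' := hrefl.neg
      rw [neg_neg w] at h2'
      refine h2'.congr fun μ => ?_
      simp only [neg_neg]
      ring
    · exact main_pos a b haT hbT v₀ t₀ x₀ κ h0 h1 h2 hκ hpos hgen v hv hvc hv0 X S hS w hw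
  have hmap : Tendsto (fun lam : ℝ => lam ^ ((1 : ℝ) / 3)) (𝓝[>] (0 : ℝ)) (𝓝[>] (0 : ℝ)) := by
    rw [tendsto_nhdsWithin_iff]
    constructor
    · have hc : ContinuousAt (fun x : ℝ => x ^ ((1 : ℝ) / 3)) 0 :=
        Real.continuousAt_rpow_const 0 _ (Or.inr (by norm_num))
      have h := hc.tendsto
      rw [Real.zero_rpow (by norm_num)] at h
      exact h.mono_left nhdsWithin_le_nhds
    · filter_upwards [self_mem_nhdsWithin] with lam hlam
      exact Real.rpow_pos_of_pos hlam _
  refine Tendsto.congr' ?_ (key.comp hmap)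
  filter_upwards [self_mem_nhdsWithin] with lam hlam
  have hlam' : (0 : ℝ) < lam := hlam
  have e2 : (lam ^ ((1 : ℝ) / 3)) ^ (2 : ℕ) = lam ^ ((2 : ℝ) / 3) := by
    rw [← Real.rpow_natCast (lam ^ ((1 : ℝ) / 3)) 2, ← Real.rpow_mul hlam'.le]
    norm_num
  have e3 : (lam ^ ((1 : ℝ) / 3)) ^ (3 : ℕ) = lam := by
    rw [← Real.rpow_natCast (lam ^ ((1 : ℝ) / 3)) 3, ← Real.rpow_mul hlam'.le]
    norm_num
  have e1 : (lam ^ ((1 : ℝ) / 3))⁻¹ = lam ^ (-(1 : ℝ) / 3) := by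
    rw [show (-(1 : ℝ) / 3) = -((1 : ℝ) / 3) by norm_num, Real.rpow_neg hlam'.le]
  simp only [Function.comp_apply]
  rw [e2, e3, e1]
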